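/- arXiv:1911.04570 — 2 statements merged into one kernel-verified Lean document; each statement's English description precedes it below -/
import Mathlib

section
/- Let $(L_m)_{m\geq 1}$ be a sequence of subsets of $\mathbb{R}^n$ satisfying $L_p + L_q \subseteq L_{p+q}$ (Minkowski sum) for all $p,q \geq 1$. Then the closure $U = \overline{\bigcup_{m\geq 1} \frac{1}{m} L_m}$ is a convex set. -/
open Pointwise

private lemma smul_mem_L' {n : ℕ} (L : ℕ → Set (Fin n → ℝ))
    (hL : ∀ p q : ℕ, 1 ≤ p → 1 ≤ q → L p + L q ⊆ L (p + q)) :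
    ∀ k, 1 ≤ k → ∀ p, 1 ≤ p → ∀ u ∈ L p, (k : ℝ) • u ∈ L (k * p) := by
  intro k
  induction k with
  | zero => omega
  | succ k ih =>
    intro _ p hp u hu
    rcases Nat.eq_zero_or_pos k with h | h
    · subst h; simpa using hu
    · have h1 : (k : ℝ) • u ∈ L (k * p) := ih h p hp u hu
      have h2 : (k : ℝ) • u + u ∈ L (k * p + p) :=
        hL (k * p) p (Nat.one_le_iff_ne_zero.2 (by positivity)) hp
          (Set.add_mem_add h1 hu)
      have : ((k + 1 : ℕ) : ℝ) • u = (k : ℝ) • u + u := by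
        push_cast; rw [add_smul, one_smul]
      rw [this]
      have : (k + 1) * p = k * p + p := by ring
      rw [this]; exact h2

private lemma comb_mem' {n : ℕ} (L : ℕ → Set (Fin n → ℝ))
    (hL : ∀ p q : ℕ, 1 ≤ p → 1 ≤ q → L p + L q ⊆ L (p + q))
    (a b : ℕ) (ha : 1 ≤ a) (hb : 1 ≤ b) {x y : Fin n → ℝ}
    (hx : x ∈ ⋃ m ∈ {m : ℕ | 1 ≤ m}, ((m : ℝ)⁻¹) • L m)
    (hy : y ∈ ⋃ m ∈ {m : ℕ | 1 ≤ m}, ((m : ℝ)⁻¹) • L m) :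
    ((a : ℝ)/((a : ℝ)+(b : ℝ))) • x + ((b : ℝ)/((a : ℝ)+(b : ℝ))) • y ∈
      ⋃ m ∈ {m : ℕ | 1 ≤ m}, ((m : ℝ)⁻¹) • L m := by
  simp only [Set.mem_iUnion, Set.mem_smul_set, Set.mem_setOf_eq] at hx hy ⊢
  obtain ⟨p, hp, u, hu, hxu⟩ := hx
  obtain ⟨q, hq, v, hv, hyv⟩ := hy
  set M : ℕ := a * q * p + b * p * q with hM
  have hqp1 : 1 ≤ a * q * p := Nat.mul_pos (Nat.mul_pos ha hq) hp
  have hpq1 : 1 ≤ b * p * q := Nat.mul_pos (Nat.mul_pos hb hp) hq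
  have hM1 : 1 ≤ M := by omega
  have h1 : ((a * q : ℕ) : ℝ) • u ∈ L (a * q * p) :=
    smul_mem_L' L hL (a * q) (Nat.mul_pos ha hq) p hp u hu
  have h2 : ((b * p : ℕ) : ℝ) • v ∈ L (b * p * q) :=
    smul_mem_L' L hL (b * p) (Nat.mul_pos hb hp) q hq v hv
  have h3 : ((a * q : ℕ) : ℝ) • u + ((b * p : ℕ) : ℝ) • v ∈ L M :=
    hL _ _ hqp1 hpq1 (Set.add_mem_add h1 h2)
  refine ⟨M, hM1, _, h3, ?_⟩
  have hp0 : (p : ℝ) ≠ 0 := Nat.cast_ne_zero.2 (by omega)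
  have hq0 : (q : ℝ) ≠ 0 := Nat.cast_ne_zero.2 (by omega)
  have haR : (1 : ℝ) ≤ (a : ℝ) := by exact_mod_cast ha
  have hbR : (1 : ℝ) ≤ (b : ℝ) := by exact_mod_cast hb
  have hab0 : (a : ℝ) + (b : ℝ) ≠ 0 := by linarith
  have hM0 : (M : ℝ) ≠ 0 := Nat.cast_ne_zero.2 (by omega)
  subst hxu; subst hyv
  rw [smul_add, smul_smul, smul_smul, smul_smul, smul_smul]
  have hMc : (M : ℝ) = ((a : ℝ) * q * p + (b : ℝ) * p * q) := by
    rw [hM]; push_cast; ring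
  have e1 : (M : ℝ)⁻¹ * ((a * q : ℕ) : ℝ) = (a : ℝ)/((a : ℝ)+(b : ℝ)) * (p : ℝ)⁻¹ := by
    push_cast
    rw [hMc]
    field_simp
  have e2 : (M : ℝ)⁻¹ * ((b * p : ℕ) : ℝ) = (b : ℝ)/((a : ℝ)+(b : ℝ)) * (q : ℝ)⁻¹ := by
    push_cast
    rw [hMc]
    field_simp
  rw [e1, e2]

/-- If `(L_m)` is a sequence of subsets of `ℝⁿ` with `L_p + L_q ⊆ L_{p+q}` (Minkowski sum),
then the closure of `⋃_{m ≥ 1} (1/m) • L_m` is convex. -/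
theorem closure_union_scaled_convex {n : ℕ} (L : ℕ → Set (Fin n → ℝ))
    (hL : ∀ p q : ℕ, 1 ≤ p → 1 ≤ q → L p + L q ⊆ L (p + q)) :
    Convex ℝ (closure (⋃ m ∈ {m : ℕ | 1 ≤ m}, ((m : ℝ)⁻¹) • L m)) := by
  set S := ⋃ m ∈ {m : ℕ | 1 ≤ m}, ((m : ℝ)⁻¹) • L m with hS
  have key : ∀ x ∈ S, ∀ y ∈ S, ∀ a b : ℝ, 0 < a → 0 < b → a + b = 1 →
      a • x + b • y ∈ closure S := by
    intro x hx y hy a b ha hb hab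
    by_cases hxy : x = y
    · subst hxy
      have : a • x + b • x = x := by
        rw [← add_smul, hab, one_smul]
      rw [this]; exact subset_closure hx
    rw [Metric.mem_closure_iff]
    intro ε hε
    set d : ℝ := ‖x - y‖ with hd
    have hd0 : 0 < d := by
      rw [hd]; simpa [sub_eq_zero] using hxy
    obtain ⟨m, hm⟩ := exists_nat_gt (2 * d / ε)
    have hm0 : 0 < (m : ℝ) := lt_trans (by positivity) hm
    have hmε : 2 / ((m : ℝ) + 2) < ε / d := by
      rw [div_lt_div_iff₀ (by positivity) hd0]
      rw [div_lt_iff₀ hε] at hm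
      nlinarith
    have ha1 : a < 1 := by linarith
    set a' : ℕ := ⌊a * (m : ℝ)⌋₊ + 1 with ha'
    have hfl_le : (⌊a * (m : ℝ)⌋₊ : ℝ) ≤ a * m := Nat.floor_le (by positivity)
    have hfl_lt : a * (m : ℝ) < (⌊a * (m : ℝ)⌋₊ : ℝ) + 1 := Nat.lt_floor_add_one _
    have hfl_le_m : ⌊a * (m : ℝ)⌋₊ ≤ m := by
      have : a * (m : ℝ) ≤ (m : ℝ) := by nlinarith
      calc ⌊a * (m : ℝ)⌋₊ ≤ ⌊(m : ℝ)⌋₊ := Nat.floor_le_floor this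
        _ = m := Nat.floor_natCast m
    set b' : ℕ := m + 2 - a' with hb'
    have hb'1 : 1 ≤ b' := by omega
    have hab' : a' + b' = m + 2 := by omega
    set r : ℝ := (a' : ℝ) / ((m : ℝ) + 2) with hr
    have habr : (a' : ℝ) + (b' : ℝ) = (m : ℝ) + 2 := by exact_mod_cast hab'
    have hmem : r • x + (1 - r) • y ∈ S := by
      have := comb_mem' L hL a' b' (by omega) hb'1 hx hy
      rw [habr] at this
      have h1r : (b' : ℝ) / ((m : ℝ) + 2) = 1 - r := by
        rw [hr]; field_simp; linarith
      rwa [h1r] at this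
    refine ⟨r • x + (1 - r) • y, hmem, ?_⟩
    have hdist : dist (a • x + b • y) (r • x + (1 - r) • y) = |a - r| * d := by
      rw [dist_eq_norm]
      have : (a • x + b • y) - (r • x + (1 - r) • y) = (a - r) • (x - y) := by
        have hb1 : b = 1 - a := by linarith
        rw [hb1]; module
      rw [this, norm_smul, Real.norm_eq_abs, hd]
    rw [hdist]
    have hpos : (0 : ℝ) < (m : ℝ) + 2 := by positivity
    have habs : |a - r| ≤ 2 / ((m : ℝ) + 2) := by
      rw [abs_sub_le_iff]
      constructor
      · have heq : a - r = (a * ((m : ℝ) + 2) - ((⌊a * (m : ℝ)⌋₊ : ℝ) + 1)) / ((m : ℝ) + 2) := by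
          rw [hr, ha']; push_cast
          field_simp
          try ring
        rw [heq, div_le_div_iff₀ hpos hpos]
        nlinarith
      · have heq : r - a = (((⌊a * (m : ℝ)⌋₊ : ℝ) + 1) - a * ((m : ℝ) + 2)) / ((m : ℝ) + 2) := by
          rw [hr, ha']; push_cast
          field_simp
          try ring
        rw [heq, div_le_div_iff₀ hpos hpos]
        nlinarith
    calc |a - r| * d ≤ (2 / ((m : ℝ) + 2)) * d := by nlinarith
      _ < (ε / d) * d := by nlinarith
      _ = ε := by field_simp
  intro x hx y hy a b ha hb hab
  rcases eq_or_lt_of_le ha with ha0 | ha0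
  · have hb1 : b = 1 := by linarith
    simp [← ha0, hb1, hy]
  rcases eq_or_lt_of_le hb with hb0 | hb0
  · have ha1 : a = 1 := by linarith
    simp [← hb0, ha1, hx]
  set f : (Fin n → ℝ) × (Fin n → ℝ) → (Fin n → ℝ) := fun z => a • z.1 + b • z.2 with hf
  have hc : Continuous f := by fun_prop
  have hmap : Set.MapsTo f (S ×ˢ S) (closure S) := by
    rintro ⟨z, w⟩ ⟨hz, hw⟩
    exact key z hz w hw a b ha0 hb0 hab
  have hmap2 := hmap.closure hc
  rw [closure_prod_eq, closure_closure] at hmap2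
  have hxy : (x, y) ∈ closure S ×ˢ closure S := ⟨hx, hy⟩
  exact hmap2 hxy
end

section
/- Let $I_m = (x^2, x y^{2^m}) \subseteq \mathbb{K}[x,y]$. The Castelnuovo–Mumford regularity satisfies $\mathrm{reg}(I_m) = 2^m + 1$, and consequently $\lim_{m\to\infty} \mathrm{reg}(I_m)/m = +\infty$; in particular the asymptotic regularity of this graded family does not exist as a finite number. -/
open MvPolynomial Filter

/-- The Castelnuovo–Mumford regularity of a Borel-fixed (strongly stable) monomial ideal,
computed as the maximal degree of a minimal generator, i.e. the least `D` such that the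
ideal is generated in degrees `≤ D` (Bayer–Stillman / Eliahou–Kervaire). -/
noncomputable def idealReg {n : ℕ} {K : Type*} [Field K]
    (I : Ideal (MvPolynomial (Fin n) K)) : ℕ :=
  sInf {D : ℕ | ∃ S : Set (MvPolynomial (Fin n) K),
    I = Ideal.span S ∧ ∀ f ∈ S, f.totalDegree ≤ D}

/-- The ideal of polynomials in `K[x,y]` all of whose monomials have `x`-exponent `≥ 2`. -/
def sqIdeal (K : Type*) [Field K] : Ideal (MvPolynomial (Fin 2) K) where
  carrier := {f | ∀ d ∈ f.support, 2 ≤ d 0}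
  zero_mem' := by simp
  add_mem' := by
    intro a b ha hb d hd
    rcases Finset.mem_union.1 (MvPolynomial.support_add hd) with h | h
    · exact ha d h
    · exact hb d h
  smul_mem' := by
    intro c f hf d hd
    rw [smul_eq_mul] at hd
    obtain ⟨a, ha, b, hb, rfl⟩ := Finset.mem_add.1 (MvPolynomial.support_mul _ _ hd)
    have := hf b hb
    simp only [Finsupp.add_apply]
    omega

lemma e2 {K : Type*} [Field K] (N : ℕ) : (X 0 * X 1 ^ N : MvPolynomial (Fin 2) K)
    = monomial (Finsupp.single 0 1 + Finsupp.single 1 N) 1 := by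
  rw [X_pow_eq_monomial, X, monomial_mul, one_mul]

lemma mem_sqIdeal_of {K : Type*} [Field K] {N : ℕ} {f : MvPolynomial (Fin 2) K}
    (hf : f ∈ Ideal.span {(X 0 : MvPolynomial (Fin 2) K) ^ 2, X 0 * X 1 ^ N})
    (hdeg : f.totalDegree ≤ N) : f ∈ sqIdeal K := by
  obtain ⟨p, q, hpq⟩ := Ideal.mem_span_pair.1 hf
  intro d hd
  by_contra h
  have hc : coeff d f ≠ 0 := mem_support_iff.1 hd
  have hsum : d.sum (fun _ e => e) ≤ f.totalDegree := le_totalDegree hd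
  rw [← hpq, coeff_add, X_pow_eq_monomial, e2, coeff_mul_monomial', coeff_mul_monomial'] at hc
  rw [if_neg (by rw [Finsupp.single_le_iff]; omega)] at hc
  split_ifs at hc with h2
  · have hd1 : N ≤ d 1 := by
      have := Finsupp.le_def.1 h2 1
      simpa using this
    have hd0 : 1 ≤ d 0 := by
      have := Finsupp.le_def.1 h2 0
      simpa using this
    have hs : d.sum (fun _ e => e) = d 0 + d 1 := by
      rw [Finsupp.sum_fintype _ _ (fun _ => rfl), Fin.sum_univ_two]
    omega
  · simp at hc

lemma g_not_mem {K : Type*} [Field K] (N : ℕ) :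
    (X 0 * X 1 ^ N : MvPolynomial (Fin 2) K) ∉ sqIdeal K := by
  classical
  intro h
  have hmem : (Finsupp.single (0 : Fin 2) 1 + Finsupp.single 1 N) ∈
      (X 0 * X 1 ^ N : MvPolynomial (Fin 2) K).support := by
    rw [e2, support_monomial]
    simp
  have := h _ hmem
  simp [Finsupp.add_apply] at this

lemma sq_le_two_pow : ∀ m : ℕ, m ^ 2 ≤ 2 ^ m + 1 := by
  have aux : ∀ m : ℕ, 3 ≤ m → 2 * m + 1 ≤ 2 ^ m := by
    intro m hm
    induction m with
    | zero => omega
    | succ k ih =>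
      rcases Nat.lt_or_ge k 3 with hk | hk
      · interval_cases k <;> simp_all <;> omega
      · have := ih (by omega)
        have h2 : 2 ≤ 2 ^ k := Nat.one_lt_two_pow_iff.2 (by omega)
        rw [pow_succ]
        omega
  intro m
  induction m with
  | zero => norm_num
  | succ k ih =>
    rcases Nat.lt_or_ge k 3 with hk | hk
    · interval_cases k <;> norm_num
    · have := aux k hk
      have : (k + 1) ^ 2 = k ^ 2 + 2 * k + 1 := by ring
      have h2 : (2:ℕ) ^ (k + 1) = 2 * 2 ^ k := by ring
      omega

/-- For `I_m = (x², x·y^{2^m}) ⊆ K[x,y]` one has `reg(I_m) = 2^m + 1`, and consequently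
`reg(I_m)/m → +∞`; in particular the asymptotic regularity does not exist as a finite
number. -/
theorem reg_two_pow_family {K : Type*} [Field K]
    (I : ℕ → Ideal (MvPolynomial (Fin 2) K))
    (hI : ∀ m, I m = Ideal.span {(X 0 : MvPolynomial (Fin 2) K) ^ 2,
      X 0 * X 1 ^ (2 ^ m)}) :
    (∀ m : ℕ, 1 ≤ m → idealReg (I m) = 2 ^ m + 1) ∧
    Tendsto (fun m : ℕ => (idealReg (I m) : ℝ) / m) atTop atTop := by
  have hreg : ∀ m : ℕ, idealReg (I m) = 2 ^ m + 1 := by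
    intro m
    have h1 : (1 : ℕ) ≤ 2 ^ m := Nat.one_le_two_pow
    have hmem : (2 ^ m + 1) ∈ {D : ℕ | ∃ S : Set (MvPolynomial (Fin 2) K),
        I m = Ideal.span S ∧ ∀ f ∈ S, f.totalDegree ≤ D} := by
      refine ⟨{(X 0 : MvPolynomial (Fin 2) K) ^ 2, X 0 * X 1 ^ (2 ^ m)}, hI m, ?_⟩
      intro f hf
      rcases hf with hf | hf
      · subst hf
        rw [totalDegree_X_pow]
        omega
      · simp only [Set.mem_singleton_iff] at hf
        subst hf
        calc (X 0 * X 1 ^ (2 ^ m) : MvPolynomial (Fin 2) K).totalDegree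
            ≤ (X 0 : MvPolynomial (Fin 2) K).totalDegree +
              ((X 1 : MvPolynomial (Fin 2) K) ^ (2 ^ m)).totalDegree := totalDegree_mul _ _
          _ ≤ 2 ^ m + 1 := by rw [totalDegree_X, totalDegree_X_pow]; omega
    refine le_antisymm (Nat.sInf_le hmem) ?_
    by_contra hlt
    push_neg at hlt
    obtain ⟨S, hSspan, hSdeg⟩ := Nat.sInf_mem (⟨_, hmem⟩ :
      Set.Nonempty {D : ℕ | ∃ S : Set (MvPolynomial (Fin 2) K),
        I m = Ideal.span S ∧ ∀ f ∈ S, f.totalDegree ≤ D})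
    rw [hI m] at hSspan
    have hsub : Ideal.span S ≤ sqIdeal K := by
      rw [Ideal.span_le]
      intro f hf
      exact mem_sqIdeal_of (hSspan ▸ Ideal.subset_span hf)
        (le_trans (hSdeg f hf) (show idealReg (I m) ≤ 2 ^ m by omega))
    exact g_not_mem (2 ^ m)
      (hsub (hSspan ▸ Ideal.subset_span (by simp)))
  refine ⟨fun m _ => hreg m, ?_⟩
  apply tendsto_atTop_mono' _ _ tendsto_natCast_atTop_atTop
  filter_upwards [eventually_ge_atTop 1] with m hm
  rw [hreg m]
  have hm' : (0 : ℝ) < m := by exact_mod_cast hm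
  rw [le_div_iff₀ hm']
  have : (m : ℝ) * m ≤ ((2 ^ m + 1 : ℕ) : ℝ) := by
    push_cast
    have := sq_le_two_pow m
    have h : ((m ^ 2 : ℕ) : ℝ) ≤ ((2 ^ m + 1 : ℕ) : ℝ) := by exact_mod_cast this
    push_cast at h
    nlinarith
  exact this
end
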